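/- (Failure of identifiability for K = 2.) In the IGL model, the uniform policy satisfies V(π_u) ≥ V(π)/K for every policy π. Consequently, when K = 2, for every policy π and every decoder ψ one has (V(π) − V(π_u))·Δψ ≤ V(π_u); hence the identifiability Assumption 2, which requires (V(π⋆) − V(π_u))·Δψ⋆ ≥ V(π_u) + η for some η > 0, cannot hold for any η > 0 when K = 2. -/

import Mathlib

open MeasureTheory ENNReal Finset

noncomputable section

namespace IGL

variable {X Y : Type*} [MeasurableSpace X] [MeasurableSpace Y] {K : ℕ}

/-- A (stochastic) policy: for each context `x`, `π x` is a probability vector over actions. -/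
def IsPolicy (K : ℕ) (π : X → Fin K → ℝ) : Prop :=
  (∀ a, Measurable fun x => π x a) ∧ (∀ x a, 0 ≤ π x a) ∧ ∀ x, ∑ a, π x a = 1

/-- A reward decoder: a measurable function `ψ : Y → [0,1]`. -/
def IsDecoder (ψ : Y → ℝ) : Prop :=
  Measurable ψ ∧ ∀ y, ψ y ∈ Set.Icc (0 : ℝ) 1

/-- The uniform policy `π_u(a|x) = 1/K`. -/
def uniformPolicy (X : Type*) (K : ℕ) : X → Fin K → ℝ := fun _ _ => (K : ℝ)⁻¹

/-- The value `V(π) = E_{x ~ d0}[∑_a π(a|x) R(x,a)]` of a policy. -/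
def polValue (d0 : Measure X) (R : X → Fin K → ℝ) (π : X → Fin K → ℝ) : ℝ :=
  ∫ x, ∑ a, π x a * R x a ∂d0

/-- `Δψ = ∫ ψ dν1 - ∫ ψ dν0`. -/
def deltaPsi (ν1 ν0 : Measure Y) (ψ : Y → ℝ) : ℝ :=
  (∫ y, ψ y ∂ν1) - ∫ y, ψ y ∂ν0

/-- The decoded value `V(π,ψ) = E[ψ(y)]` under the IGL generative process: `x ~ d0`,
`a ~ π(·|x)`, `r ~ Bernoulli(R(x,a))`, `y ~ ν1` if `r = 1`, `y ~ ν0` if `r = 0`. -/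
def decValue (d0 : Measure X) (R : X → Fin K → ℝ) (ν1 ν0 : Measure Y)
    (π : X → Fin K → ℝ) (ψ : Y → ℝ) : ℝ :=
  ∫ x, ∑ a, π x a * (R x a * (∫ y, ψ y ∂ν1) + (1 - R x a) * ∫ y, ψ y ∂ν0) ∂d0


/-!
Since `π(a|x) ≤ 1`, pointwise `∑ₐ π(a|x) R(x,a) ≤ ∑ₐ R(x,a) = K ∑ₐ π_u(a|x) R(x,a)`, and integrating
gives `V(π) ≤ K V(π_u)`. For `K = 2` this and `0 ≤ V(π)` give `|V(π) - V(π_u)| ≤ V(π_u)`, while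
`|Δψ| ≤ 1` because both integrals of `ψ` lie in `[0,1]`; so `(V(π) - V(π_u)) Δψ ≤ V(π_u)`.
-/

section Bounded

variable {α : Type*} [MeasurableSpace α] {μ : Measure α} {f : α → ℝ} {a b : ℝ}

theorem integrable_of_mem_Icc [IsFiniteMeasure μ] (hf : Measurable f)
    (h : ∀ x, f x ∈ Set.Icc a b) : Integrable f μ :=
  Integrable.of_bound hf.aestronglyMeasurable (max |a| |b|)
    (ae_of_all _ fun x => abs_le_max_abs_abs (h x).1 (h x).2)

theorem integral_mem_Icc_of_mem_Icc [IsProbabilityMeasure μ] (hf : Measurable f)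
    (h : ∀ x, f x ∈ Set.Icc a b) : ∫ x, f x ∂μ ∈ Set.Icc a b := by
  have hint : Integrable f μ := integrable_of_mem_Icc hf h
  constructor
  · simpa using integral_mono (integrable_const a) hint fun x => (h x).1
  · simpa using integral_mono hint (integrable_const b) fun x => (h x).2

end Bounded

theorem IsDecoder.abs_deltaPsi_le_one {ψ : Y → ℝ} (hψ : IsDecoder ψ) (ν1 ν0 : Measure Y)
    [IsProbabilityMeasure ν1] [IsProbabilityMeasure ν0] : |deltaPsi ν1 ν0 ψ| ≤ 1 := by
  obtain ⟨h1_nonneg, h1_le⟩ := integral_mem_Icc_of_mem_Icc (μ := ν1) hψ.1 hψ.2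
  obtain ⟨h0_nonneg, h0_le⟩ := integral_mem_Icc_of_mem_Icc (μ := ν0) hψ.1 hψ.2
  exact abs_sub_le_of_nonneg_of_le h1_nonneg h1_le h0_nonneg h0_le

section Value

variable {d0 : Measure X} {R : X → Fin K → ℝ} {π : X → Fin K → ℝ}

theorem IsPolicy.le_one (hπ : IsPolicy K π) (x : X) (a : Fin K) : π x a ≤ 1 :=
  hπ.2.2 x ▸ Finset.single_le_sum (fun b _ => hπ.2.1 x b) (Finset.mem_univ a)

theorem IsPolicy.sum_mul_le_sum (hπ : IsPolicy K π) (hR : ∀ x a, 0 ≤ R x a) (x : X) :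
    ∑ a, π x a * R x a ≤ ∑ a, R x a :=
  Finset.sum_le_sum fun a _ => mul_le_of_le_one_left (hR x a) (hπ.le_one x a)

theorem polValue_nonneg (hπ : ∀ x a, 0 ≤ π x a) (hR : ∀ x a, 0 ≤ R x a) :
    0 ≤ polValue d0 R π :=
  integral_nonneg fun x => Finset.sum_nonneg fun a _ => mul_nonneg (hπ x a) (hR x a)

theorem uniformPolicy_nonneg {Z : Type*} (z : Z) (a : Fin K) : 0 ≤ uniformPolicy Z K z a := by
  unfold uniformPolicy
  positivity

theorem polValue_uniformPolicy :
    polValue d0 R (uniformPolicy X K) = (K : ℝ)⁻¹ * ∫ x, ∑ a, R x a ∂d0 := by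
  simp only [polValue, uniformPolicy, ← Finset.mul_sum, integral_const_mul]

theorem IsPolicy.polValue_le_card_mul_polValue_uniformPolicy [IsFiniteMeasure d0]
    (hRmeas : ∀ a, Measurable fun x => R x a) (hR : ∀ x a, R x a ∈ Set.Icc (0 : ℝ) 1)
    (hπ : IsPolicy K π) : polValue d0 R π ≤ K * polValue d0 R (uniformPolicy X K) := by
  rcases Nat.eq_zero_or_pos K with rfl | hK
  · simp [polValue]
  have hR_nonneg : ∀ x a, 0 ≤ R x a := fun x a => (hR x a).1
  have hsum_int : Integrable (fun x => ∑ a, R x a) d0 :=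
    integrable_finsetSum _ fun a _ => integrable_of_mem_Icc (hRmeas a) fun x => hR x a
  rw [polValue_uniformPolicy, mul_inv_cancel_left₀ (by positivity)]
  exact integral_mono_of_nonneg
    (ae_of_all _ fun x => Finset.sum_nonneg fun a _ => mul_nonneg (hπ.2.1 x a) (hR_nonneg x a))
    hsum_int (ae_of_all _ (hπ.sum_mul_le_sum hR_nonneg))

theorem IsPolicy.mul_deltaPsi_le_polValue_uniformPolicy [IsFiniteMeasure d0] (hK : K = 2)
    (hRmeas : ∀ a, Measurable fun x => R x a) (hR : ∀ x a, R x a ∈ Set.Icc (0 : ℝ) 1)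
    (hπ : IsPolicy K π) {ψ : Y → ℝ} (hψ : IsDecoder ψ) (ν1 ν0 : Measure Y)
    [IsProbabilityMeasure ν1] [IsProbabilityMeasure ν0] :
    (polValue d0 R π - polValue d0 R (uniformPolicy X K)) * deltaPsi ν1 ν0 ψ
      ≤ polValue d0 R (uniformPolicy X K) := by
  set V := polValue d0 R π
  set Vu := polValue d0 R (uniformPolicy X K)
  have hR_nonneg : ∀ x a, 0 ≤ R x a := fun x a => (hR x a).1
  have hV_nonneg : 0 ≤ V := polValue_nonneg hπ.2.1 hR_nonneg
  have hVu_nonneg : 0 ≤ Vu := polValue_nonneg uniformPolicy_nonneg hR_nonneg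
  have hV_le : V ≤ 2 * Vu := by
    simpa [hK] using hπ.polValue_le_card_mul_polValue_uniformPolicy hRmeas hR
  have hgap : |V - Vu| ≤ Vu := abs_sub_le_iff.2 ⟨by linarith, by linarith⟩
  calc (V - Vu) * deltaPsi ν1 ν0 ψ ≤ |V - Vu| * |deltaPsi ν1 ν0 ψ| := by
        rw [← abs_mul]; exact le_abs_self _
    _ ≤ Vu * 1 := mul_le_mul hgap (hψ.abs_deltaPsi_le_one ν1 ν0) (abs_nonneg _) hVu_nonneg
    _ = Vu := mul_one Vu

end Value

theorem igl_identifiability_fails_for_two_actions_general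
    (d0 : Measure X) [IsProbabilityMeasure d0]
    (ν1 ν0 : Measure Y) [IsProbabilityMeasure ν1] [IsProbabilityMeasure ν0]
    (R : X → Fin K → ℝ) (hRmeas : ∀ a, Measurable fun x => R x a)
    (hR : ∀ x a, R x a ∈ Set.Icc (0 : ℝ) 1) :
    (∀ π : X → Fin K → ℝ, IsPolicy K π →
        polValue d0 R π / K ≤ polValue d0 R (uniformPolicy X K))
      ∧ (K = 2 →
          (∀ (π : X → Fin K → ℝ) (ψ : Y → ℝ), IsPolicy K π → IsDecoder ψ →
            (polValue d0 R π - polValue d0 R (uniformPolicy X K)) * deltaPsi ν1 ν0 ψ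
              ≤ polValue d0 R (uniformPolicy X K))
          ∧ ∀ η : ℝ, 0 < η →
              ∀ (πstar : X → Fin K → ℝ) (ψstar : Y → ℝ),
                IsPolicy K πstar → IsDecoder ψstar →
                ¬(polValue d0 R (uniformPolicy X K) + η
                    ≤ (polValue d0 R πstar - polValue d0 R (uniformPolicy X K))
                        * deltaPsi ν1 ν0 ψstar)) := by
  refine ⟨fun π hπ => div_le_of_le_mul₀ (Nat.cast_nonneg K)
    (polValue_nonneg uniformPolicy_nonneg fun x a => (hR x a).1)
    (by rw [mul_comm]; exact hπ.polValue_le_card_mul_polValue_uniformPolicy hRmeas hR),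
    fun hK2 => ⟨fun π ψ hπ hψ => ?_, fun η hη π ψ hπ hψ hident => ?_⟩⟩
  · exact hπ.mul_deltaPsi_le_polValue_uniformPolicy hK2 hRmeas hR hψ ν1 ν0
  · have := hπ.mul_deltaPsi_le_polValue_uniformPolicy (d0 := d0) hK2 hRmeas hR hψ ν1 ν0
    linarith

/-- **failure of identifiability for K = 2.** In the IGL model, the uniform
policy satisfies `V(π_u) ≥ V(π)/K` for every policy `π`. Consequently, when `K = 2`, for
every policy `π` and every decoder `ψ` one has `(V(π) − V(π_u))·Δψ ≤ V(π_u)`; hence the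
identifiability Assumption 2, requiring `(V(π⋆) − V(π_u))·Δψ⋆ ≥ V(π_u) + η` for some
`η > 0`, cannot hold when `K = 2`. -/
theorem igl_identifiability_fails_for_two_actions
    (hK : 0 < K)
    (d0 : Measure X) [IsProbabilityMeasure d0]
    (ν1 ν0 : Measure Y) [IsProbabilityMeasure ν1] [IsProbabilityMeasure ν0]
    (R : X → Fin K → ℝ) (hRmeas : ∀ a, Measurable fun x => R x a)
    (hR : ∀ x a, R x a ∈ Set.Icc (0 : ℝ) 1) :
    (∀ π : X → Fin K → ℝ, IsPolicy K π →
        polValue d0 R π / K ≤ polValue d0 R (uniformPolicy X K))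
      ∧ (K = 2 →
          (∀ (π : X → Fin K → ℝ) (ψ : Y → ℝ), IsPolicy K π → IsDecoder ψ →
            (polValue d0 R π - polValue d0 R (uniformPolicy X K)) * deltaPsi ν1 ν0 ψ
              ≤ polValue d0 R (uniformPolicy X K))
          ∧ ∀ η : ℝ, 0 < η →
              ∀ (πstar : X → Fin K → ℝ) (ψstar : Y → ℝ),
                IsPolicy K πstar → IsDecoder ψstar →
                ¬(polValue d0 R (uniformPolicy X K) + η
                    ≤ (polValue d0 R πstar - polValue d0 R (uniformPolicy X K))
                        * deltaPsi ν1 ν0 ψstar)) :=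
  igl_identifiability_fails_for_two_actions_general d0 ν1 ν0 R hRmeas hR

end IGL
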